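/- If λ ∈ ℂ is nonzero and K(λ) = λ²M + λC + K is invertible, then A − λI is invertible and (A − λI)^{-1} equals the block matrix [[−(1/λ)I + (1/λ)K^{1/2}K(λ)^{-1}K^{1/2}, −K^{1/2}K(λ)^{-1}M^{1/2}], [M^{1/2}K(λ)^{-1}K^{1/2}, −λM^{1/2}K(λ)^{-1}M^{1/2}]]. -/

import Mathlib

open Matrix
open scoped ComplexOrder

noncomputable section

/-- The value `x* P x` (which is real for Hermitian `P`), taken as its real part. -/
def qf {n : ℕ} (P : Matrix (Fin n) (Fin n) ℂ) (x : Fin n → ℂ) : ℝ :=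
  (star x ⬝ᵥ P.mulVec x).re

/-- The (positive semidefinite) square root of a positive semidefinite matrix,
extended by `0` to all matrices. -/
def msqrt {n : ℕ} (P : Matrix (Fin n) (Fin n) ℂ) : Matrix (Fin n) (Fin n) ℂ :=
  open scoped Classical in
  if h : P.PosSemidef then
    h.1.eigenvectorUnitary.1 * diagonal ((↑) ∘ (√·) ∘ h.1.eigenvalues : Fin n → ℂ) *
      (star h.1.eigenvectorUnitary : Matrix (Fin n) (Fin n) ℂ)
  else 0

/-- The quadratic matrix pencil `K(λ) = λ²M + λC + K`. -/
def Kpen {n : ℕ} (M C K : Matrix (Fin n) (Fin n) ℂ) (lam : ℂ) :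
    Matrix (Fin n) (Fin n) ℂ :=
  lam ^ 2 • M + lam • C + K

/-- The real part of the `+`-root of the scalar quadratic
`m(x) λ² + c(x) λ + k(x) = 0`. -/
def rfun {n : ℕ} (M C K : Matrix (Fin n) (Fin n) ℂ) (x : Fin n → ℂ) : ℝ :=
  open scoped Classical in
  if (qf C x) ^ 2 ≥ 4 * qf M x * qf K x then
    (-(qf C x) + Real.sqrt ((qf C x) ^ 2 - 4 * qf M x * qf K x)) / (2 * qf M x)
  else
    -(qf C x) / (2 * qf M x)

/-- The spectral-shift bound `γ = sup_{x ≠ 0} Re p₊(x)`. -/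
def gam {n : ℕ} (M C K : Matrix (Fin n) (Fin n) ℂ) : ℝ :=
  sSup {y : ℝ | ∃ x : Fin n → ℂ, x ≠ 0 ∧ rfun M C K x = y}

/-- The phase-space matrix `A = [[0, K½ M⁻½], [−M⁻½ K½, −M⁻½ C M⁻½]]`. -/
def phaseA {n : ℕ} (M C K : Matrix (Fin n) (Fin n) ℂ) :
    Matrix (Fin n ⊕ Fin n) (Fin n ⊕ Fin n) ℂ :=
  fromBlocks 0 (msqrt K * (msqrt M)⁻¹)
    (-((msqrt M)⁻¹ * msqrt K)) (-((msqrt M)⁻¹ * C * (msqrt M)⁻¹))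

/-- The operator norm of a matrix with respect to the Euclidean norm. -/
def opNorm {m : Type*} [Fintype m] [DecidableEq m] (A : Matrix m m ℂ) : ℝ :=
  ‖toEuclideanCLM (𝕜 := ℂ) A‖

/-- The block matrix `L(μ) = [[K½ K(μ)⁻½, 0], [μ M½ K(μ)⁻½, I]]`. -/
def Lmat {n : ℕ} (M C K : Matrix (Fin n) (Fin n) ℂ) (mu : ℝ) :
    Matrix (Fin n ⊕ Fin n) (Fin n ⊕ Fin n) ℂ :=
  fromBlocks (msqrt K * (msqrt (Kpen M C K (mu : ℂ)))⁻¹) 0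
    ((mu : ℂ) • (msqrt M * (msqrt (Kpen M C K (mu : ℂ)))⁻¹)) 1

/-! With `S = M^{1/2}`, `T = K^{1/2}` and `R = K(λ)⁻¹`, the candidate inverse is checked block by
block. The upper blocks cancel directly; the lower ones, once `S` is written as `S⁻¹M`, reduce
to `S⁻¹ K(λ) R = S⁻¹` multiplied on the right by `T` resp. `S`. A one-sided inverse of a square
matrix is two-sided. -/

open scoped MatrixOrder in
theorem msqrt_eq_sqrt {n : ℕ} {P : Matrix (Fin n) (Fin n) ℂ} (hP : P.PosSemidef) :
    msqrt P = CFC.sqrt P := by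
  rw [msqrt, dif_pos hP, CFC.sqrt_eq_real_sqrt P hP.nonneg, cfcₙ_eq_cfc, hP.1.cfc_eq,
    IsHermitian.cfc, Unitary.conjStarAlgAut_apply]
  rfl

open scoped MatrixOrder in
theorem msqrt_mul_self {n : ℕ} {P : Matrix (Fin n) (Fin n) ℂ} (hP : P.PosSemidef) :
    msqrt P * msqrt P = P := by
  rw [msqrt_eq_sqrt hP]
  exact CFC.sqrt_mul_sqrt_self P hP.nonneg

theorem fromBlocks_sub_smul_one {l m α : Type*} [DecidableEq l] [DecidableEq m] [Ring α]
    (A : Matrix l l α) (B : Matrix l m α) (C : Matrix m l α) (D : Matrix m m α) (c : α) :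
    fromBlocks A B C D - c • 1 = fromBlocks (A - c • 1) B C (D - c • 1) := by
  rw [← fromBlocks_one, fromBlocks_smul, sub_eq_add_neg, fromBlocks_neg, fromBlocks_add]
  simp [sub_eq_add_neg]

theorem isUnit_det_of_mul_self_eq {m R : Type*} [Fintype m] [DecidableEq m] [CommRing R]
    {S M : Matrix m m R} (hSM : S * S = M) (hM : IsUnit M.det) : IsUnit S.det :=
  isUnit_of_mul_isUnit_left (by rwa [← det_mul, hSM])

section Linearization

variable {m 𝕜 : Type*} [Fintype m] [DecidableEq m] [Field 𝕜]

theorem linearization_sub_smul_mul_resolvent {S T M C K R : Matrix m m 𝕜} {lam : 𝕜}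
    (hS : IsUnit S.det) (hSM : S * S = M) (hTK : T * T = K) (hlam : lam ≠ 0)
    (hR : (lam ^ 2 • M + lam • C + K) * R = 1) :
    (fromBlocks 0 (T * S⁻¹) (-(S⁻¹ * T)) (-(S⁻¹ * C * S⁻¹)) - lam • 1) *
      fromBlocks (-(1 / lam) • 1 + (1 / lam) • (T * R * T)) (-(T * R * S))
        (S * R * T) (-lam • (S * R * S)) = 1 := by
  have hSR : (lam ^ 2 • S + lam • (S⁻¹ * C) + S⁻¹ * T * T) * R = S⁻¹ := by
    have hSP :
        lam ^ 2 • S + lam • (S⁻¹ * C) + S⁻¹ * T * T = S⁻¹ * (lam ^ 2 • M + lam • C + K) := by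
      rw [← hSM, ← hTK, Matrix.mul_add, Matrix.mul_add, Matrix.mul_smul, Matrix.mul_smul,
        nonsing_inv_mul_cancel_left S S hS, Matrix.mul_assoc]
    rw [hSP, Matrix.mul_assoc, hR, Matrix.mul_one]
  have hSRT := congrArg (· * T) hSR
  have hSRS := congrArg (· * S) hSR
  simp only [add_mul, Matrix.smul_mul, Matrix.mul_assoc, nonsing_inv_mul _ hS] at hSRT hSRS
  rw [fromBlocks_sub_smul_one, fromBlocks_multiply, ← fromBlocks_one]
  congr 1 <;>
    simp only [sub_mul, mul_add, neg_mul, mul_neg, Matrix.smul_mul, Matrix.mul_smul,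
      Matrix.one_mul, Matrix.mul_one, Matrix.mul_assoc, nonsing_inv_mul_cancel_left S _ hS,
      smul_smul, neg_smul, zero_sub, neg_neg]
  · rw [one_div_mul_cancel hlam, one_smul, one_smul]
    abel
  · abel
  · linear_combination (norm := skip) (-(1 / lam)) • hSRT
    match_scalars <;> field_simp <;> ring
  · linear_combination (norm := module) hSRS

end Linearization

theorem resolvent_formula_general {n : ℕ}
    (M C K : Matrix (Fin n) (Fin n) ℂ)
    (hM : M.PosDef) (hK : K.PosDef)
    (lam : ℂ) (hlam : lam ≠ 0) (hKlam : IsUnit (Kpen M C K lam)) :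
    IsUnit (phaseA M C K - lam • 1) ∧
      (phaseA M C K - lam • 1)⁻¹ =
        fromBlocks
          (-(1 / lam) • 1 + (1 / lam) • (msqrt K * (Kpen M C K lam)⁻¹ * msqrt K))
          (-(msqrt K * (Kpen M C K lam)⁻¹ * msqrt M))
          (msqrt M * (Kpen M C K lam)⁻¹ * msqrt K)
          (-lam • (msqrt M * (Kpen M C K lam)⁻¹ * msqrt M)) := by
  have hSM := msqrt_mul_self hM.posSemidef
  have hS := isUnit_det_of_mul_self_eq hSM ((isUnit_iff_isUnit_det M).1 hM.isUnit)
  have hR := mul_nonsing_inv _ ((isUnit_iff_isUnit_det _).1 hKlam)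
  have key := linearization_sub_smul_mul_resolvent hS hSM (msqrt_mul_self hK.posSemidef) hlam hR
  exact ⟨(isUnit_iff_isUnit_det _).2 (isUnit_det_of_right_inverse key), inv_eq_right_inv key⟩

/-- If `λ ≠ 0` and `K(λ)` is invertible, then `A − λI` is invertible with the
explicit block resolvent formula. -/
theorem resolvent_formula {n : ℕ} (hn : 1 ≤ n)
    (M C K : Matrix (Fin n) (Fin n) ℂ)
    (hM : M.PosDef) (hC : C.PosDef) (hK : K.PosDef)
    (lam : ℂ) (hlam : lam ≠ 0) (hKlam : IsUnit (Kpen M C K lam)) :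
    IsUnit (phaseA M C K - lam • 1) ∧
      (phaseA M C K - lam • 1)⁻¹ =
        fromBlocks
          (-(1 / lam) • 1 + (1 / lam) • (msqrt K * (Kpen M C K lam)⁻¹ * msqrt K))
          (-(msqrt K * (Kpen M C K lam)⁻¹ * msqrt M))
          (msqrt M * (Kpen M C K lam)⁻¹ * msqrt K)
          (-lam • (msqrt M * (Kpen M C K lam)⁻¹ * msqrt M)) :=
  resolvent_formula_general M C K hM hK lam hlam hKlam

end
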